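/- Let F = (A, C) be a finite AAF and l a labelling of F. There exists a CC-wise total order ≼ on F such that l is a complete labelling of F^1_≼ (Reduction 1) if and only if the following three conditions hold: (1) ((I×I) ∪ (I×U) ∪ (U×I)) ∩ C = ∅, i.e., in-labelled arguments only attack and are only attacked by out-labelled arguments; (2) every out-labelled argument attacks or is attacked by an in-labelled argument; (3) every connected component of the induced subgraph F_U = (U, C ∩ (U×U)) contains a directed cycle. -/
import Mathlib


/-- The three labels of a labelling: `inn` (in), `out`, `undec`. -/
inductive Label where
  | inn : Label
  | out : Label
  | undec : Label
deriving DecidableEq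

/-- Undirected connectivity: reachability in the symmetric closure of `C`.
`Conn C a b` holds iff `a` and `b` are joined by an undirected path, i.e.
they lie in the same connected component of `(A, C)`. -/
def Conn {A : Type*} (C : A → A → Prop) : A → A → Prop :=
  Relation.ReflTransGen (fun x y => C x y ∨ C y x)

/-- A CC-wise total order on the AAF `(A, C)`: a reflexive transitive relation
whose restriction to each connected component is total. -/
structure CCOrder {A : Type*} (C : A → A → Prop) where
  le : A → A → Prop
  refl : ∀ a, le a a
  trans : ∀ a b c, le a b → le b c → le a c
  total : ∀ a b, Conn C a b → le a b ∨ le b a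

/-- Strict part: `a ≺ b` iff `a ≼ b` and not `b ≼ a`. -/
def CCOrder.lt {A : Type*} {C : A → A → Prop} (r : CCOrder C) (a b : A) : Prop :=
  r.le a b ∧ ¬ r.le b a

/-- Reduction 1: `C₁ = {(a,b) | ((a,b) ∈ C ∧ b ≼ a) ∨ ((b,a) ∈ C ∧ b ≺ a)}`. -/
def red1 {A : Type*} (C : A → A → Prop) (r : CCOrder C) (a b : A) : Prop :=
  (C a b ∧ r.le b a) ∨ (C b a ∧ r.lt b a)

/-- Reduction 2: `C₂ = {(a,b) ∈ C | b ≼ a ∨ (b,a) ∉ C}`. -/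
def red2 {A : Type*} (C : A → A → Prop) (r : CCOrder C) (a b : A) : Prop :=
  C a b ∧ (r.le b a ∨ ¬ C b a)

/-- Reduction 3: `C₁ ∪ C₂`. -/
def red3 {A : Type*} (C : A → A → Prop) (r : CCOrder C) (a b : A) : Prop :=
  red1 C r a b ∨ red2 C r a b

/-- Reduction 4: `C₄ = {(a,b) ∈ C | b ≼ a}`. -/
def red4 {A : Type*} (C : A → A → Prop) (r : CCOrder C) (a b : A) : Prop :=
  C a b ∧ r.le b a

/-- `l` is a complete labelling of the attack relation `C`:
`l a = in` iff all attackers of `a` are `out`, and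
`l a = out` iff some attacker of `a` is `in` (and `undec` otherwise,
which is automatic for a three-valued labelling). -/
def CompleteLabelling {A : Type*} (C : A → A → Prop) (l : A → Label) : Prop :=
  ∀ a, (l a = Label.inn ↔ ∀ b, C b a → l b = Label.out) ∧
       (l a = Label.out ↔ ∃ b, C b a ∧ l b = Label.inn)

/-- `(a,b) ∈ F₁`: an attack of `C` assigned value 1 by `f`. -/
def inF1 {A : Type*} (C : A → A → Prop) (f : A → A → Bool) (a b : A) : Prop :=
  C a b ∧ f a b = true

/-- `(a,b) ∈ F₀`: an attack of `C` assigned value 0 by `f`. -/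
def inF0 {A : Type*} (C : A → A → Prop) (f : A → A → Bool) (a b : A) : Prop :=
  C a b ∧ f a b = false

/-- The relation `conv(F₀) ∪ F₁`. -/
def Drel {A : Type*} (C : A → A → Prop) (f : A → A → Bool) (a b : A) : Prop :=
  inF0 C f b a ∨ inF1 C f a b

/-- The relation `F₁ \ conv(F₀)`. -/
def Erel {A : Type*} (C : A → A → Prop) (f : A → A → Bool) (a b : A) : Prop :=
  inF1 C f a b ∧ ¬ inF0 C f b a

/-- `f` is a preference function over `(A, C)`: every directed cycle of
`conv(F₀) ∪ F₁` is entirely contained in `F₁ \ conv(F₀)`.  Equivalently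
(edge-wise): every edge of `conv(F₀) ∪ F₁` lying on a directed cycle
(i.e. admitting a return path) belongs to `F₁ \ conv(F₀)`. -/
def IsPrefFun {A : Type*} (C : A → A → Prop) (f : A → A → Bool) : Prop :=
  ∀ a b, Drel C f a b → Relation.ReflTransGen (Drel C f) b a → Erel C f a b

/-- A ranking function for `(F, l)` (assuming no argument is labelled `out`):
(1) every attack touching an `in`-labelled argument strictly decreases rank, and
(2) every `undec` argument has an `undec` attacker of rank at most its own. -/
def IsRanking {A : Type*} (C : A → A → Prop) (l : A → Label) (ψ : A → ℤ) : Prop :=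
  (∀ u v, C u v → (l u = Label.inn ∨ l v = Label.inn) → ψ u > ψ v) ∧
  (∀ u, l u = Label.undec → ∃ v, C v u ∧ l v = Label.undec ∧ ψ v ≤ ψ u)
section StmtOneAux

variable {A : Type*} (C : A → A → Prop) (l : A → Label)

/-- Edges of the `undec`-subgraph. -/
def Urel (x y : A) : Prop := C x y ∧ l x = Label.undec ∧ l y = Label.undec

/-- Arguments lying on a directed cycle of the `undec`-subgraph. -/
def Tset : Set A := {x | ∃ w, Urel C l x w ∧ Relation.ReflTransGen (Urel C l) w x}

/-- Arguments at undirected distance at most `n` from `Tset`. -/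
def Dset : ℕ → Set A
  | 0 => Tset C l
  | n + 1 => {x | x ∈ Dset n ∨ ∃ y, y ∈ Dset n ∧ (Urel C l x y ∨ Urel C l y x)}

open Classical in
noncomputable def dfun (x : A) : ℕ :=
  if h : ∃ n, x ∈ Dset C l n then Nat.find h else 0

noncomputable def psi (x : A) : ℤ :=
  if l x = Label.inn then 2 else if l x = Label.out then 1 else -(dfun C l x : ℤ)

variable {C l}

lemma psi_inn {x : A} (hx : l x = Label.inn) : psi C l x = 2 := by
  unfold psi; rw [hx]; simp

lemma psi_out {x : A} (hx : l x = Label.out) : psi C l x = 1 := by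
  unfold psi; rw [hx]; simp

lemma psi_undec {x : A} (hx : l x = Label.undec) : psi C l x = -(dfun C l x : ℤ) := by
  unfold psi; rw [hx]; simp

lemma dfun_spec {a : A} (hex : ∃ n, a ∈ Dset C l n) :
    a ∈ Dset C l (dfun C l a) ∧ ∀ k < dfun C l a, a ∉ Dset C l k := by
  classical
  unfold dfun; rw [dif_pos hex]
  exact ⟨Nat.find_spec hex, fun k hk => Nat.find_min hex hk⟩

lemma dfun_le {a : A} {n : ℕ} (h : a ∈ Dset C l n) : dfun C l a ≤ n := by
  classical
  unfold dfun; rw [dif_pos ⟨n, h⟩]; exact Nat.find_le h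

lemma Tstep {x : A} (hx : x ∈ Tset C l) : ∃ y, Urel C l y x ∧ y ∈ Tset C l := by
  obtain ⟨w, hxw, hpath⟩ := hx
  rcases hpath.cases_tail with h | ⟨y, hwy, hyx⟩
  · rw [← h] at hxw hpath
    exact ⟨x, hxw, ⟨x, hxw, hpath⟩⟩
  · exact ⟨y, hyx, ⟨x, hyx, Relation.ReflTransGen.head hxw hwy⟩⟩

lemma exists_mem_Dset {u v : A}
    (hconn : Relation.ReflTransGen (fun x y => Urel C l x y ∨ Urel C l y x) u v)
    (hv : v ∈ Tset C l) : ∃ n, u ∈ Dset C l n := by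
  induction hconn using Relation.ReflTransGen.head_induction_on with
  | refl => exact ⟨0, hv⟩
  | head hedge _ ih =>
    obtain ⟨n, hn⟩ := ih
    exact ⟨n + 1, Or.inr ⟨_, hn, hedge⟩⟩

lemma undec_attack
    (h3 : ∀ u, l u = Label.undec →
        ∃ v w, Conn (Urel C l) u v ∧ Urel C l v w ∧
          Relation.ReflTransGen (Urel C l) w v)
    {a : A} (ha : l a = Label.undec) :
    ∃ b, l b = Label.undec ∧
      ((C b a ∧ psi C l a ≤ psi C l b) ∨ (C a b ∧ psi C l a < psi C l b)) := by
  obtain ⟨v, w, hconn, hvw, hwv⟩ := h3 a ha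
  have hex : ∃ n, a ∈ Dset C l n := exists_mem_Dset hconn ⟨w, hvw, hwv⟩
  obtain ⟨hmem, hmin⟩ := dfun_spec hex
  cases hn : dfun C l a with
  | zero =>
    rw [hn] at hmem
    obtain ⟨y, hya, hyT⟩ := Tstep hmem
    have hy : l y = Label.undec := hya.2.1
    have hdy : dfun C l y = 0 := Nat.le_zero.mp (dfun_le (n := 0) hyT)
    refine ⟨y, hy, Or.inl ⟨hya.1, ?_⟩⟩
    rw [psi_undec ha, psi_undec hy, hn, hdy]
  | succ m =>
    rw [hn] at hmem
    rcases hmem with h | ⟨y, hyD, hedge⟩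
    · exact absurd h (hmin m (by omega))
    · have hdy : dfun C l y ≤ m := dfun_le hyD
      rcases hedge with hay | hya
      · refine ⟨y, hay.2.2, Or.inr ⟨hay.1, ?_⟩⟩
        rw [psi_undec ha, psi_undec hay.2.2, hn]; push_cast; omega
      · refine ⟨y, hya.2.1, Or.inl ⟨hya.1, ?_⟩⟩
        rw [psi_undec ha, psi_undec hya.2.1, hn]; push_cast; omega

end StmtOneAux
/-- existence of a CC-wise total order making `l` complete under
Reduction 1 is equivalent to the three structural conditions. -/
theorem stmt1 {A : Type*} [Fintype A] (C : A → A → Prop) (l : A → Label) :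
    (∃ r : CCOrder C, CompleteLabelling (red1 C r) l) ↔
      ((∀ a b, C a b →
          ¬((l a = Label.inn ∧ l b = Label.inn) ∨
            (l a = Label.inn ∧ l b = Label.undec) ∨
            (l a = Label.undec ∧ l b = Label.inn))) ∧
       (∀ a, l a = Label.out → ∃ b, l b = Label.inn ∧ (C a b ∨ C b a)) ∧
       (∀ u, l u = Label.undec →
          ∃ v w, Conn (fun x y => C x y ∧ l x = Label.undec ∧ l y = Label.undec) u v ∧
            (C v w ∧ l v = Label.undec ∧ l w = Label.undec) ∧
            Relation.ReflTransGen
              (fun x y => C x y ∧ l x = Label.undec ∧ l y = Label.undec) w v)) := by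
  classical
  constructor
  · rintro ⟨r, hl⟩
    have hboth : ∀ a b, C a b → red1 C r a b ∨ red1 C r b a := by
      intro a b hab
      rcases r.total a b (Relation.ReflTransGen.single (Or.inl hab)) with h | h
      · by_cases h2 : r.le b a
        · exact Or.inl (Or.inl ⟨hab, h2⟩)
        · exact Or.inr (Or.inr ⟨hab, h, h2⟩)
      · exact Or.inl (Or.inl ⟨hab, h⟩)
    refine ⟨?_, ?_, ?_⟩
    · -- condition 1
      intro a b hab hbad
      rcases hboth a b hab with h | h <;>
        rcases hbad with ⟨ha, hb⟩ | ⟨ha, hb⟩ | ⟨ha, hb⟩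
      · have := (hl b).1.mp hb a h; simp_all
      · have := (hl b).2.mpr ⟨a, h, ha⟩; simp_all
      · have := (hl b).1.mp hb a h; simp_all
      · have := (hl a).1.mp ha b h; simp_all
      · have := (hl a).1.mp ha b h; simp_all
      · have := (hl a).2.mpr ⟨b, h, hb⟩; simp_all
    · -- condition 2
      intro a ha
      obtain ⟨b, hb, hbinn⟩ := (hl a).2.mp ha
      rcases hb with ⟨h, _⟩ | ⟨h, _⟩
      · exact ⟨b, hbinn, Or.inr h⟩
      · exact ⟨b, hbinn, Or.inl h⟩
    · -- condition 3
      intro u hu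
      have key : ∀ x, l x = Label.undec → ∃ y, l y = Label.undec ∧ red1 C r y x := by
        intro x hx
        have h1' : ¬ ∀ b, red1 C r b x → l b = Label.out := by
          intro h
          have := (hl x).1.mpr h
          simp_all
        push_neg at h1'
        obtain ⟨b, hb, hbo⟩ := h1'
        have hbni : l b ≠ Label.inn := by
          intro hbi
          have := (hl x).2.mpr ⟨b, hb, hbi⟩
          simp_all
        cases hbl : l b with
        | inn => exact absurd hbl hbni
        | out => exact absurd hbl hbo
        | undec => exact ⟨b, hbl, hb⟩
      obtain ⟨g, hg⟩ : ∃ g : A → A, ∀ x, l x = Label.undec →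
          l (g x) = Label.undec ∧ red1 C r (g x) x :=
        ⟨fun x => if h : l x = Label.undec then (key x h).choose else x,
         fun x hx => by simp only [dif_pos hx]; exact (key x hx).choose_spec⟩
      have hseqU : ∀ k, l (g^[k] u) = Label.undec := by
        intro k
        induction k with
        | zero => simpa using hu
        | succ k ih => rw [Function.iterate_succ_apply']; exact (hg _ ih).1
      have hstep : ∀ k, red1 C r (g^[k + 1] u) (g^[k] u) := by
        intro k
        rw [Function.iterate_succ_apply']
        exact (hg _ (hseqU k)).2
      have hle1 : ∀ k, r.le (g^[k] u) (g^[k + 1] u) := by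
        intro k
        rcases hstep k with ⟨_, h⟩ | ⟨_, h, _⟩
        · exact h
        · exact h
      have hmono : ∀ m n, m ≤ n → r.le (g^[m] u) (g^[n] u) := by
        intro m n h
        induction n, h using Nat.le_induction with
        | base => exact r.refl _
        | succ n hn ih => exact r.trans _ _ _ ih (hle1 n)
      obtain ⟨i, j, hij, heq⟩ : ∃ i j : ℕ, i < j ∧ g^[i] u = g^[j] u := by
        obtain ⟨i, j, hne, heq⟩ :=
          Fintype.exists_ne_map_eq_of_card_lt
            (fun k : Fin (Fintype.card A + 1) => g^[k.1] u) (by simp)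
        rcases lt_or_gt_of_ne hne with h | h
        · exact ⟨i.1, j.1, h, heq⟩
        · exact ⟨j.1, i.1, h, heq.symm⟩
      have hcirc : ∀ k, i ≤ k → k + 1 ≤ j → r.le (g^[k + 1] u) (g^[k] u) := by
        intro k hk hk1
        have h1 := hmono (k + 1) j hk1
        have h2 := hmono i k hk
        rw [heq] at h2
        exact r.trans _ _ _ h1 h2
      have hedgeU : ∀ k, i ≤ k → k + 1 ≤ j →
          (C (g^[k + 1] u) (g^[k] u) ∧ l (g^[k + 1] u) = Label.undec ∧
            l (g^[k] u) = Label.undec) := by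
        intro k hk hk1
        rcases hstep k with ⟨h, _⟩ | ⟨_, _, hn⟩
        · exact ⟨h, hseqU _, hseqU _⟩
        · exact absurd (hcirc k hk hk1) hn
      have hpath : ∀ k, i ≤ k → k ≤ j →
          Relation.ReflTransGen (Urel C l) (g^[k] u) (g^[i] u) := by
        intro k hk
        induction k, hk using Nat.le_induction with
        | base => exact fun _ => Relation.ReflTransGen.refl
        | succ k hk ih =>
          intro hk1
          exact Relation.ReflTransGen.head (hedgeU k hk hk1) (ih (by omega))
      have hconn : ∀ k, Conn (Urel C l) u (g^[k] u) := by
        intro k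
        induction k with
        | zero =>
          rw [Function.iterate_zero_apply]
          exact Relation.ReflTransGen.refl
        | succ k ih =>
          refine ih.tail ?_
          rcases hstep k with ⟨h, _⟩ | ⟨h, _, _⟩
          · exact Or.inr ⟨h, hseqU _, hseqU _⟩
          · exact Or.inl ⟨h, hseqU _, hseqU _⟩
      obtain ⟨t, rfl⟩ : ∃ t, j = t + 1 := ⟨j - 1, by omega⟩
      have hit : i ≤ t := by omega
      have hCvw := hedgeU t hit le_rfl
      rw [← heq] at hCvw
      exact ⟨g^[i] u, g^[t] u, hconn i, hCvw, hpath t hit (by omega)⟩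
  · rintro ⟨h1, h2, h3⟩
    refine ⟨⟨fun a b => psi C l a ≤ psi C l b, fun a => le_refl _,
      fun a b c hab hbc => le_trans hab hbc,
      fun a b _ => le_total _ _⟩, ?_⟩
    intro a
    cases hla : l a with
    | inn =>
      have noatt : ∀ c, ¬ red1 C ⟨fun a b => psi C l a ≤ psi C l b, fun a => le_refl _,
          fun a b c hab hbc => le_trans hab hbc, fun a b _ => le_total _ _⟩ c a := by
        rintro c (⟨hC, hle⟩ | ⟨hC, hle, hnle⟩)
        · cases hc : l c with
          | inn => exact h1 c a hC (Or.inl ⟨hc, hla⟩)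
          | undec => exact h1 c a hC (Or.inr (Or.inr ⟨hc, hla⟩))
          | out =>
            have hle' : psi C l a ≤ psi C l c := hle
            rw [psi_inn hla, psi_out hc] at hle'; omega
        · cases hc : l c with
          | inn => exact h1 a c hC (Or.inl ⟨hla, hc⟩)
          | undec => exact h1 a c hC (Or.inr (Or.inl ⟨hla, hc⟩))
          | out =>
            have hle' : psi C l a ≤ psi C l c := hle
            rw [psi_inn hla, psi_out hc] at hle'; omega
      constructor
      · exact ⟨fun _ c hc => absurd hc (noatt c), fun _ => rfl⟩
      · constructor
        · intro h; exact absurd h (by simp)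
        · rintro ⟨b, hb, _⟩; exact absurd hb (noatt b)
    | out =>
      obtain ⟨b, hbinn, hedge⟩ := h2 a hla
      have hlt : psi C l a < psi C l b := by rw [psi_out hla, psi_inn hbinn]; omega
      have hred : red1 C ⟨fun a b => psi C l a ≤ psi C l b, fun a => le_refl _,
          fun a b c hab hbc => le_trans hab hbc, fun a b _ => le_total _ _⟩ b a := by
        rcases hedge with h | h
        · exact Or.inr ⟨h, le_of_lt hlt, not_le.mpr hlt⟩
        · exact Or.inl ⟨h, le_of_lt hlt⟩
      constructor
      · constructor
        · intro h; exact absurd h (by simp)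
        · intro h
          have := h b hred
          rw [hbinn] at this
          exact absurd this (by simp)
      · exact ⟨fun _ => ⟨b, hred, hbinn⟩, fun _ => rfl⟩
    | undec =>
      obtain ⟨b, hbund, hb⟩ := undec_attack h3 hla
      have hred : red1 C ⟨fun a b => psi C l a ≤ psi C l b, fun a => le_refl _,
          fun a b c hab hbc => le_trans hab hbc, fun a b _ => le_total _ _⟩ b a := by
        rcases hb with ⟨hC, hle⟩ | ⟨hC, hlt⟩
        · exact Or.inl ⟨hC, hle⟩
        · exact Or.inr ⟨hC, le_of_lt hlt, not_le.mpr hlt⟩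
      have noinn : ∀ c, red1 C ⟨fun a b => psi C l a ≤ psi C l b, fun a => le_refl _,
          fun a b c hab hbc => le_trans hab hbc, fun a b _ => le_total _ _⟩ c a →
          l c ≠ Label.inn := by
        rintro c (⟨hC, _⟩ | ⟨hC, _⟩) hcinn
        · exact h1 c a hC (Or.inr (Or.inl ⟨hcinn, hla⟩))
        · exact h1 a c hC (Or.inr (Or.inr ⟨hla, hcinn⟩))
      constructor
      · constructor
        · intro h; exact absurd h (by simp)
        · intro h
          have := h b hred
          rw [hbund] at this
          exact absurd this (by simp)
      · constructor
        · intro h; exact absurd h (by simp)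
        · rintro ⟨c, hc, hcinn⟩
          exact absurd hcinn (noinn c hc)
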